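/- For λ ∈ ℂ \ ℤ and μ ∈ ℂ, the formulas L_{r,s}·v_{m,n} = (r+λ+m)v_{m+r,n+s+1} + ((λ+m+r)/(λ+m))(μ+n)v_{m+r,n+s} define a representation of the centerless non-graded Virasoro-like algebra on ⊕_{m,n∈ℤ} ℂv_{m,n}. -/
import Mathlib


/-- The action L_{r,s}·v_{m,n} = (r+λ+m)v_{m+r,n+s+1}
+ ((λ+m+r)/(λ+m))(μ+n)v_{m+r,n+s}, as a linear endomorphism. -/
noncomputable def actA10 (lam mu : ℂ) (r s : ℤ) :
    Module.End ℂ ((ℤ × ℤ) →₀ ℂ) :=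
  Finsupp.lsum ℂ fun p : ℤ × ℤ =>
    ((r : ℂ) + lam + (p.1 : ℂ)) • Finsupp.lsingle (p.1 + r, p.2 + s + 1)
      + ((lam + (p.1 : ℂ) + (r : ℂ)) / (lam + (p.1 : ℂ)) * (mu + (p.2 : ℂ)))
        • Finsupp.lsingle (p.1 + r, p.2 + s)

lemma actA10_single (lam mu : ℂ) (r s : ℤ) (m n : ℤ) (c : ℂ) :
    actA10 lam mu r s (Finsupp.single (m, n) c) =
      Finsupp.single (m + r, n + s + 1) (((r : ℂ) + lam + (m : ℂ)) * c)
        + Finsupp.single (m + r, n + s)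
            ((lam + (m : ℂ) + (r : ℂ)) / (lam + (m : ℂ)) * (mu + (n : ℂ)) * c) := by
  simp only [actA10, Finsupp.lsum_single, LinearMap.add_apply, LinearMap.smul_apply,
    Finsupp.lsingle_apply, Finsupp.smul_single, smul_eq_mul]

set_option maxHeartbeats 8000000 in
/-- The module A_{1,0,λ,μ} (λ ∉ ℤ): the formulas define a representation
of the centerless non-graded Virasoro-like algebra. -/
theorem stmt_7 (lam mu : ℂ)
    (hlam : lam ∉ Set.range ((↑·) : ℤ → ℂ)) :
    ∀ h k r s : ℤ,
      ⁅actA10 lam mu h k, actA10 lam mu r s⁆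
        = ((r - h : ℤ) : ℂ) • actA10 lam mu (h + r) (k + s + 1)
          + ((s - k : ℤ) : ℂ) • actA10 lam mu (h + r) (k + s) := by
  have hm : ∀ a : ℤ, lam + (a : ℂ) ≠ 0 := by
    intro a ha
    exact hlam ⟨-a, by push_cast; linear_combination -ha⟩
  intro h k r s
  rw [LieRing.of_associative_ring_bracket]
  refine Finsupp.lhom_ext fun p c => ?_
  obtain ⟨m, n⟩ := p
  simp only [LinearMap.sub_apply, Module.End.mul_apply, LinearMap.add_apply,
    LinearMap.smul_apply, map_add, actA10_single, smul_add, Finsupp.smul_single,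
    smul_eq_mul]
  ext ⟨x, y⟩
  simp only [Finsupp.add_apply, Finsupp.sub_apply, Finsupp.single_apply, Prod.mk.injEq]
  have h1 := hm m
  have h2 : lam + ((r : ℂ) + (m : ℂ)) ≠ 0 := by
    have := hm (r + m); push_cast at this; exact this
  have h3 : lam + ((h : ℂ) + (m : ℂ)) ≠ 0 := by
    have := hm (h + m); push_cast at this; exact this
  push_cast at *
  simp only [add_assoc, add_comm, add_left_comm]
  split_ifs <;>
    first
      | (exfalso; omega)
      | ring1
      | (field_simp; ring1)
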